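/- There is an absolute constant C with the following property. Let N₁, N₃, L₁, L₃ > 0 with N₃ ≤ N₁/4, let τ ∈ ℝ and ξ ∈ ℝ² with |ξ| ≥ N₁/2, and define E(τ,ξ) = {(τ₃,ξ₃) ∈ ℝ×ℝ² : |ξ₃| ≤ N₃, |τ₃ − |ξ₃|²| ≤ L₃, |τ + τ₃ − |ξ + ξ₃|²| ≤ L₁}. Then the Lebesgue measure of E(τ,ξ) in ℝ³ satisfies |E(τ,ξ)| ≤ C N₁⁻¹ N₃ L₁ L₃. -/
import Mathlib


open MeasureTheory Real Set
open scoped ENNReal NNReal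

noncomputable section

/-- Squared Euclidean norm on `ℝ²`. -/
def nsq (x : ℝ × ℝ) : ℝ := x.1 ^ 2 + x.2 ^ 2

/-- Euclidean norm on `ℝ²`. -/
def enorm2 (x : ℝ × ℝ) : ℝ := Real.sqrt (nsq x)

lemma continuous_nsq : Continuous nsq := by unfold nsq; fun_prop
lemma continuous_enorm2 : Continuous enorm2 := by
  unfold enorm2; exact Real.continuous_sqrt.comp continuous_nsq

lemma abs_snd_le (p : ℝ × ℝ) : |p.2| ≤ enorm2 p := by
  rw [enorm2, nsq, ← Real.sqrt_sq_eq_abs]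
  exact Real.sqrt_le_sqrt (by nlinarith [sq_nonneg p.1])

lemma vol_abs_le (a b M : ℝ) (ha : a ≠ 0) (hM : 0 ≤ M) :
    volume {x : ℝ | |b - a * x| ≤ M} ≤ ENNReal.ofReal (2 * M / |a|) := by
  rcases ha.lt_or_gt with h | h
  · have hsub : {x : ℝ | |b - a * x| ≤ M} ⊆ Icc ((b + M) / a) ((b - M) / a) := by
      intro x hx
      simp only [mem_setOf_eq, abs_le] at hx
      exact ⟨by rw [div_le_iff_of_neg h]; linarith, by rw [le_div_iff_of_neg h]; linarith⟩
    refine le_trans (measure_mono hsub) ?_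
    rw [Real.volume_Icc]
    apply ENNReal.ofReal_le_ofReal
    rw [abs_of_neg h]
    rw [div_sub_div_same, show b - M - (b + M) = -(2*M) by ring, neg_div, div_neg_eq_neg_div]
  · have hsub : {x : ℝ | |b - a * x| ≤ M} ⊆ Icc ((b - M) / a) ((b + M) / a) := by
      intro x hx
      simp only [mem_setOf_eq, abs_le] at hx
      exact ⟨by rw [div_le_iff₀ h]; linarith, by rw [le_div_iff₀ h]; linarith⟩
    refine le_trans (measure_mono hsub) ?_
    rw [Real.volume_Icc]
    apply ENNReal.ofReal_le_ofReal
    rw [abs_of_pos h, div_sub_div_same, show b + M - (b - M) = 2*M by ring]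

lemma vol_strip (a b c M N₃ : ℝ) (ha : a ≠ 0) (hM : 0 ≤ M) :
    volume {p : ℝ × ℝ | enorm2 p ≤ N₃ ∧ |c - 2 * (a * p.1 + b * p.2)| ≤ M} ≤
      ENNReal.ofReal (2 * N₃) * ENNReal.ofReal (M / |a|) := by
  set K := {p : ℝ × ℝ | enorm2 p ≤ N₃ ∧ |c - 2 * (a * p.1 + b * p.2)| ≤ M} with hK
  have hKmeas : MeasurableSet K := by
    apply MeasurableSet.inter
    · exact (isClosed_le (continuous_enorm2.comp continuous_id) continuous_const).measurableSet
    · have hc : Continuous fun p : ℝ × ℝ => c - 2 * (a * p.1 + b * p.2) := by fun_prop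
      exact (isClosed_le hc.abs continuous_const).measurableSet
  rw [Measure.volume_eq_prod, Measure.prod_apply_symm hKmeas]
  have step : ∀ y : ℝ, volume ((fun x => (x, y)) ⁻¹' K) ≤
      (Icc (-N₃) N₃).indicator (fun _ => ENNReal.ofReal (M / |a|)) y := by
    intro y
    by_cases hy : y ∈ Icc (-N₃) N₃
    · rw [indicator_of_mem hy]
      have h2a : (2*a) ≠ 0 := by simpa using ha
      refine le_trans (measure_mono ?_) (le_trans (vol_abs_le (2*a) (c - 2*b*y) M h2a hM) ?_)
      · intro x hx
        simp only [mem_preimage, hK, mem_setOf_eq] at hx ⊢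
        have : c - 2*b*y - 2*a*x = c - 2*(a*x + b*y) := by ring
        rw [this]
        exact hx.2
      · apply ENNReal.ofReal_le_ofReal
        rw [abs_mul, abs_two]
        rw [show 2*M/(2*|a|) = M/|a| by rw [mul_div_mul_left _ _ (two_ne_zero)]]
    · rw [indicator_of_notMem hy]
      have : ((fun x => (x, y)) ⁻¹' K) = ∅ := by
        ext x
        simp only [mem_preimage, hK, mem_setOf_eq, mem_empty_iff_false, iff_false, not_and]
        intro h1 h2
        exact hy (abs_le.mp (le_trans (abs_snd_le (x, y)) h1))
      rw [this, measure_empty]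
  refine le_trans (lintegral_mono step) ?_
  rw [lintegral_indicator measurableSet_Icc, setLIntegral_const, Real.volume_Icc]
  rw [show N₃ - -N₃ = 2*N₃ by ring, mul_comm]

lemma enorm2_comm (x y : ℝ) : enorm2 (x, y) = enorm2 (y, x) := by
  unfold enorm2 nsq; ring_nf

lemma enorm2_swap (p : ℝ × ℝ) : enorm2 p.swap = enorm2 p := by
  unfold enorm2 nsq Prod.swap; ring_nf

lemma nsq_add (ξ p : ℝ × ℝ) :
    nsq (ξ + p) = nsq ξ + 2 * (ξ.1 * p.1 + ξ.2 * p.2) + nsq p := by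
  simp only [nsq, Prod.fst_add, Prod.snd_add]; ring

/-- **The measure bound (4.12).** If `N₃ ≤ N₁/4` and `|ξ| ≥ N₁/2`, the set
`E(τ,ξ) = {(τ₃,ξ₃) : |ξ₃| ≤ N₃, |τ₃-|ξ₃|²| ≤ L₃, |τ+τ₃-|ξ+ξ₃|²| ≤ L₁}` has measure
at most `C N₁⁻¹ N₃ L₁ L₃`. -/
theorem measure_bound_E :
    ∃ C : ℝ≥0, ∀ N₁ N₃ L₁ L₃ : ℝ, 0 < N₁ → 0 < N₃ → 0 < L₁ → 0 < L₃ →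
      N₃ ≤ N₁ / 4 →
      ∀ (τ : ℝ) (ξ : ℝ × ℝ), N₁ / 2 ≤ enorm2 ξ →
        volume {q : ℝ × (ℝ × ℝ) |
            enorm2 q.2 ≤ N₃ ∧ |q.1 - nsq q.2| ≤ L₃ ∧ |τ + q.1 - nsq (ξ + q.2)| ≤ L₁} ≤
          (C : ℝ≥0∞) * ENNReal.ofReal (N₁⁻¹ * N₃ * L₁ * L₃) := by
  use 24
  intro N₁ N₃ L₁ L₃ hN₁ hN₃ hL₁ hL₃ h34 τ ξ hξ
  set c := τ - nsq ξ with hc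
  set M := L₁ + L₃ with hMdef
  have hM : 0 ≤ M := by positivity
  set S := {q : ℝ × (ℝ × ℝ) |
      enorm2 q.2 ≤ N₃ ∧ |q.1 - nsq q.2| ≤ L₃ ∧ |τ + q.1 - nsq (ξ + q.2)| ≤ L₁} with hS
  set K := {p : ℝ × ℝ | enorm2 p ≤ N₃ ∧ |c - 2 * (ξ.1 * p.1 + ξ.2 * p.2)| ≤ M} with hKdef
  have hSmeas : MeasurableSet S := by
    apply MeasurableSet.inter
    · exact (isClosed_le (continuous_enorm2.comp continuous_snd) continuous_const).measurableSet
    apply MeasurableSet.inter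
    · have hc1 : Continuous fun q : ℝ × (ℝ × ℝ) => q.1 - nsq q.2 :=
        continuous_fst.sub (continuous_nsq.comp continuous_snd)
      exact (isClosed_le hc1.abs continuous_const).measurableSet
    · have hc2 : Continuous fun q : ℝ × (ℝ × ℝ) => τ + q.1 - nsq (ξ + q.2) :=
        (continuous_const.add continuous_fst).sub
          (continuous_nsq.comp (continuous_const.add continuous_snd))
      exact (isClosed_le hc2.abs continuous_const).measurableSet
  have hKmeas : MeasurableSet K := by
    apply MeasurableSet.inter
    · exact (isClosed_le continuous_enorm2 continuous_const).measurableSet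
    · have hc3 : Continuous fun p : ℝ × ℝ => c - 2 * (ξ.1 * p.1 + ξ.2 * p.2) := by fun_prop
      exact (isClosed_le hc3.abs continuous_const).measurableSet
  -- key implication: membership in S forces the strip condition
  have hstrip : ∀ τ₃ : ℝ, ∀ p : ℝ × ℝ, (τ₃, p) ∈ S → p ∈ K := by
    intro τ₃ p hq
    obtain ⟨h1, h2, h3⟩ := hq
    refine ⟨h1, ?_⟩
    have heq : c - 2 * (ξ.1 * p.1 + ξ.2 * p.2)
        = (τ + τ₃ - nsq (ξ + p)) - (τ₃ - nsq p) := by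
      rw [hc, nsq_add]; ring
    rw [heq]
    calc |(τ + τ₃ - nsq (ξ + p)) - (τ₃ - nsq p)|
        ≤ |τ + τ₃ - nsq (ξ + p)| + |τ₃ - nsq p| := abs_sub _ _
      _ ≤ L₁ + L₃ := add_le_add h3 h2
  -- slice over ξ₃
  rw [Measure.volume_eq_prod, Measure.prod_apply_symm hSmeas]
  have step : ∀ p : ℝ × ℝ, volume ((fun τ₃ => (τ₃, p)) ⁻¹' S) ≤
      K.indicator (fun _ => ENNReal.ofReal (2 * min L₁ L₃)) p := by
    intro p
    by_cases hp : p ∈ K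
    · rw [indicator_of_mem hp]
      rcases le_total L₁ L₃ with h | h
      · rw [min_eq_left h]
        have hsub : ((fun τ₃ => (τ₃, p)) ⁻¹' S) ⊆
            Icc (nsq (ξ + p) - τ - L₁) (nsq (ξ + p) - τ + L₁) := by
          intro τ₃ hτ₃
          obtain ⟨_, _, h3⟩ := hτ₃
          rw [abs_le] at h3
          constructor <;> linarith [h3.1, h3.2]
        refine le_trans (measure_mono hsub) ?_
        rw [Real.volume_Icc]
        exact ENNReal.ofReal_le_ofReal (le_of_eq (by ring))
      · rw [min_eq_right h]
        have hsub : ((fun τ₃ => (τ₃, p)) ⁻¹' S) ⊆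
            Icc (nsq p - L₃) (nsq p + L₃) := by
          intro τ₃ hτ₃
          obtain ⟨_, h2, _⟩ := hτ₃
          rw [abs_le] at h2
          constructor <;> linarith [h2.1, h2.2]
        refine le_trans (measure_mono hsub) ?_
        rw [Real.volume_Icc]
        exact ENNReal.ofReal_le_ofReal (le_of_eq (by ring))
    · rw [indicator_of_notMem hp]
      have : ((fun τ₃ => (τ₃, p)) ⁻¹' S) = ∅ := by
        ext τ₃
        simp only [mem_preimage, mem_empty_iff_false, iff_false]
        intro hmem
        exact hp (hstrip τ₃ p hmem)
      rw [this, measure_empty]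
  refine le_trans (lintegral_mono step) ?_
  rw [lintegral_indicator hKmeas, setLIntegral_const]
  -- bound the area of K
  have hN13 : (0:ℝ) < N₁ / 3 := by linarith
  have hbig : N₁ / 3 ≤ |ξ.1| ∨ N₁ / 3 ≤ |ξ.2| := by
    by_contra hcon
    push_neg at hcon
    have hsq : (N₁ / 2) ^ 2 ≤ nsq ξ := by
      have h0 : 0 ≤ N₁ / 2 := by linarith
      have := Real.sqrt_le_sqrt (le_of_eq (rfl : nsq ξ = nsq ξ))
      have h1 : N₁ / 2 ≤ Real.sqrt (nsq ξ) := hξ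
      nlinarith [Real.sq_sqrt (by unfold nsq; positivity : (0:ℝ) ≤ nsq ξ),
        Real.sqrt_nonneg (nsq ξ)]
    unfold nsq at hsq
    nlinarith [abs_nonneg ξ.1, abs_nonneg ξ.2, sq_abs ξ.1, sq_abs ξ.2,
      hcon.1, hcon.2]
  have hKvol : volume K ≤ ENNReal.ofReal (2 * N₃) * ENNReal.ofReal (3 * M / N₁) := by
    rcases hbig with hb | hb
    · have ha : ξ.1 ≠ 0 := by
        intro h0; rw [h0, abs_zero] at hb; linarith
      refine le_trans (vol_strip ξ.1 ξ.2 c M N₃ ha hM) ?_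
      refine mul_le_mul_right (ENNReal.ofReal_le_ofReal ?_) _
      rw [div_le_div_iff₀ (lt_of_lt_of_le hN13 hb) hN₁]
      nlinarith [abs_nonneg ξ.1]
    · have ha : ξ.2 ≠ 0 := by
        intro h0; rw [h0, abs_zero] at hb; linarith
      have hswap : K = Prod.swap ⁻¹' {p : ℝ × ℝ |
          enorm2 p ≤ N₃ ∧ |c - 2 * (ξ.2 * p.1 + ξ.1 * p.2)| ≤ M} := by
        ext p
        simp only [hKdef, mem_preimage, Prod.swap_prod_mk, mem_setOf_eq, Prod.fst_swap,
          Prod.snd_swap]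
        rw [enorm2_swap p,
          show ξ.2 * p.2 + ξ.1 * p.1 = ξ.1 * p.1 + ξ.2 * p.2 by ring]
      have hKmeas2 : MeasurableSet {p : ℝ × ℝ |
          enorm2 p ≤ N₃ ∧ |c - 2 * (ξ.2 * p.1 + ξ.1 * p.2)| ≤ M} := by
        apply MeasurableSet.inter
        · exact (isClosed_le continuous_enorm2 continuous_const).measurableSet
        · have hc3 : Continuous fun p : ℝ × ℝ => c - 2 * (ξ.2 * p.1 + ξ.1 * p.2) := by fun_prop
          exact (isClosed_le hc3.abs continuous_const).measurableSet
      rw [hswap, Measure.volume_eq_prod,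
        Measure.measurePreserving_swap.measure_preimage hKmeas2.nullMeasurableSet]
      rw [← Measure.volume_eq_prod]
      refine le_trans (vol_strip ξ.2 ξ.1 c M N₃ ha hM) ?_
      refine mul_le_mul_right (ENNReal.ofReal_le_ofReal ?_) _
      rw [div_le_div_iff₀ (lt_of_lt_of_le hN13 hb) hN₁]
      nlinarith [abs_nonneg ξ.2]
  calc ENNReal.ofReal (2 * min L₁ L₃) * volume K
      ≤ ENNReal.ofReal (2 * min L₁ L₃) *
        (ENNReal.ofReal (2 * N₃) * ENNReal.ofReal (3 * M / N₁)) := by gcongr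
    _ = ENNReal.ofReal (2 * min L₁ L₃ * (2 * N₃ * (3 * M / N₁))) := by
        rw [← ENNReal.ofReal_mul (show (0:ℝ) ≤ 2 * N₃ by positivity),
          ← ENNReal.ofReal_mul (mul_nonneg (by norm_num) (le_min hL₁.le hL₃.le))]
    _ ≤ ENNReal.ofReal (24 * (N₁⁻¹ * N₃ * L₁ * L₃)) := by
        apply ENNReal.ofReal_le_ofReal
        have hN₁inv : (0:ℝ) < N₁⁻¹ := by positivity
        rw [div_eq_mul_inv]
        rcases le_total L₁ L₃ with h | h
        · rw [min_eq_left h]; nlinarith [mul_pos hN₃ hN₁inv, mul_pos hL₁ (mul_pos hN₃ hN₁inv)]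
        · rw [min_eq_right h]; nlinarith [mul_pos hN₃ hN₁inv, mul_pos hL₃ (mul_pos hN₃ hN₁inv)]
    _ = (24 : ℝ≥0) * ENNReal.ofReal (N₁⁻¹ * N₃ * L₁ * L₃) := by
        rw [ENNReal.ofReal_mul (by norm_num)]
        norm_num [ENNReal.ofReal_ofNat]


end
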